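/- The minimax error E(k,σ) = inf over estimators x̃ of sup over k-sparse x₀ and noise e with ‖e‖ = σ of ‖x̃(A x₀ + e) − x₀‖ satisfies (1/2)·σ/ε_{2k} ≤ E(k,σ) ≤ 2·σ/ε_{2k}. -/

import Mathlib

open scoped ENNReal

/-- Number of nonzero entries of a coefficient vector. -/
noncomputable def sparsity {N : ℕ} (x : EuclideanSpace ℂ (Fin N)) : ℕ :=
  (Finset.univ.filter fun j => x j ≠ 0).card

lemma sparsity_le_card {N : ℕ} {x : EuclideanSpace ℂ (Fin N)} {S : Finset (Fin N)}
    (h : ∀ j, x j ≠ 0 → j ∈ S) : sparsity x ≤ S.card := by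
  apply Finset.card_le_card
  intro j hj
  simp only [Finset.mem_filter] at hj
  exact h j hj.2

lemma sparsity_sub_le {N : ℕ} (x y : EuclideanSpace ℂ (Fin N)) :
    sparsity (x - y) ≤ sparsity x + sparsity y := by
  classical
  calc sparsity (x - y)
      ≤ ((Finset.univ.filter fun j => x j ≠ 0) ∪ (Finset.univ.filter fun j => y j ≠ 0)).card := by
        apply Finset.card_le_card
        intro j hj
        simp only [Finset.mem_filter, Finset.mem_union] at hj ⊢
        have : x j - y j ≠ 0 := hj.2
        by_contra hc
        push_neg at hc
        have hx : x j = 0 := by tauto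
        have hy : y j = 0 := by tauto
        exact this (by rw [hx, hy, sub_zero])
    _ ≤ _ := Finset.card_union_le _ _

lemma sparsity_smul_le {N : ℕ} (c : ℂ) (x : EuclideanSpace ℂ (Fin N)) :
    sparsity (c • x) ≤ sparsity x := by
  apply Finset.card_le_card
  intro j hj
  simp only [Finset.mem_filter, Finset.mem_univ, true_and] at hj ⊢
  intro hx
  exact hj (by rw [show (c • x) j = c * x j from rfl, hx, mul_zero])

/-- Minimax theorem: (1/2)·σ/ε_{2k} ≤ E(k,σ) ≤ 2·σ/ε_{2k}. -/
theorem stmt2 {N : ℕ} {H : Type*} [NormedAddCommGroup H] [InnerProductSpace ℂ H]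
    (A : EuclideanSpace ℂ (Fin N) →ₗ[ℂ] H) (k : ℕ)
    (hcol : ∀ j : Fin N, ‖A (EuclideanSpace.single j 1)‖ = 1)
    (σ : ℝ) (hσ : 0 < σ)
    (ε : ℝ)
    (hε : ε = sInf {r : ℝ | ∃ v : EuclideanSpace ℂ (Fin N),
      ‖v‖ = 1 ∧ sparsity v ≤ 2 * k ∧ r = ‖A v‖})
    (hεpos : 0 < ε)
    (hatt : ∃ v : EuclideanSpace ℂ (Fin N),
      ‖v‖ = 1 ∧ sparsity v ≤ 2 * k ∧ ‖A v‖ = ε)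
    (E : ℝ≥0∞)
    (hE : E = ⨅ est : H → EuclideanSpace ℂ (Fin N),
      ⨆ x₀ : {x : EuclideanSpace ℂ (Fin N) // sparsity x ≤ k},
        ⨆ e : {e : H // ‖e‖ = σ},
          ENNReal.ofReal ‖est (A x₀.1 + e.1) - x₀.1‖) :
    ENNReal.ofReal (σ / (2 * ε)) ≤ E ∧ E ≤ ENNReal.ofReal (2 * σ / ε) := by
  classical
  have hbdd : BddBelow {r : ℝ | ∃ v : EuclideanSpace ℂ (Fin N),
      ‖v‖ = 1 ∧ sparsity v ≤ 2 * k ∧ r = ‖A v‖} := by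
    refine ⟨0, ?_⟩
    rintro r ⟨v, -, -, rfl⟩
    positivity
  have hcoerc : ∀ w : EuclideanSpace ℂ (Fin N), sparsity w ≤ 2 * k →
      ε * ‖w‖ ≤ ‖A w‖ := by
    intro w hw
    rcases eq_or_ne w 0 with rfl | hw0
    · simp
    · have hnw : (0:ℝ) < ‖w‖ := norm_pos_iff.mpr hw0
      set c : ℂ := ((‖w‖⁻¹ : ℝ) : ℂ) with hcdef
      have hc : ‖c‖ = ‖w‖⁻¹ := by
        rw [hcdef, Complex.norm_real, Real.norm_eq_abs, abs_of_pos (inv_pos.mpr hnw)]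
      have h1 : ‖c • w‖ = 1 := by
        rw [norm_smul, hc]; field_simp
      have h2 : sparsity (c • w) ≤ 2 * k := le_trans (sparsity_smul_le c w) hw
      have hmem : ‖A (c • w)‖ ∈ {r : ℝ | ∃ v : EuclideanSpace ℂ (Fin N),
          ‖v‖ = 1 ∧ sparsity v ≤ 2 * k ∧ r = ‖A v‖} := ⟨c • w, h1, h2, rfl⟩
      have hle : ε ≤ ‖A (c • w)‖ := hε ▸ csInf_le hbdd hmem
      rw [map_smul, norm_smul, hc] at hle
      have : ε * ‖w‖ ≤ (‖w‖⁻¹ * ‖A w‖) * ‖w‖ := by nlinarith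
      calc ε * ‖w‖ ≤ (‖w‖⁻¹ * ‖A w‖) * ‖w‖ := this
        _ = ‖A w‖ := by field_simp
  constructor
  · -- lower bound
    obtain ⟨v, hv1, hvs, hvA⟩ := hatt
    set c : ℂ := ((2 * σ / ε : ℝ) : ℂ) with hcdef
    have hcpos : (0:ℝ) < 2 * σ / ε := by positivity
    have hcnorm : ‖c‖ = 2 * σ / ε := by
      rw [hcdef, Complex.norm_real, Real.norm_eq_abs, abs_of_pos hcpos]
    set u : EuclideanSpace ℂ (Fin N) := c • v with hudef
    have hAu : ‖A u‖ = 2 * σ := by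
      rw [hudef, map_smul, norm_smul, hvA, hcnorm]
      field_simp
    have hunorm : ‖u‖ = 2 * σ / ε := by
      rw [hudef, norm_smul, hv1, hcnorm, mul_one]
    set S : Finset (Fin N) := Finset.univ.filter (fun j => v j ≠ 0) with hSdef
    have hScard : S.card ≤ 2 * k := hvs
    obtain ⟨T₁, hT₁S, hT₁card⟩ := Finset.exists_subset_card_eq (s := S) (n := min S.card k) (min_le_left _ _)
    set x₁ : EuclideanSpace ℂ (Fin N) := WithLp.toLp 2 (fun j => if j ∈ T₁ then u j else 0) with hx₁def
    set x₂ : EuclideanSpace ℂ (Fin N) := x₁ - u with hx₂def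
    have hs₁ : sparsity x₁ ≤ k := by
      refine le_trans (sparsity_le_card (S := T₁) ?_) (by omega)
      intro j hj
      by_contra hc
      exact hj (by simp [hx₁def, hc])
    have hs₂ : sparsity x₂ ≤ k := by
      refine le_trans (sparsity_le_card (S := S \ T₁) ?_) ?_
      · intro j hj
        have hval : x₂ j = x₁ j - u j := rfl
        rw [Finset.mem_sdiff]
        by_cases hT : j ∈ T₁
        · exfalso; apply hj; rw [hval]; simp [hx₁def, hT]
        · refine ⟨?_, hT⟩
          have hu : u j ≠ 0 := by
            intro h0
            apply hj
            rw [hval]; simp [hx₁def, hT, h0]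
          have hv : v j ≠ 0 := by
            intro h0
            exact hu (by rw [hudef, show (c • v) j = c * v j from rfl, h0, mul_zero])
          simp [hSdef, hv]
      · rw [Finset.card_sdiff_of_subset hT₁S]
        omega
    have hsub : x₁ - x₂ = u := sub_sub_cancel x₁ u
    set e₁ : H := -((1/2 : ℂ) • A u) with he₁def
    set e₂ : H := (1/2 : ℂ) • A u with he₂def
    have hhalf : ‖(1/2 : ℂ)‖ = 1/2 := by norm_num
    have he₁ : ‖e₁‖ = σ := by
      rw [he₁def, norm_neg, norm_smul, hhalf, hAu]; ring
    have he₂ : ‖e₂‖ = σ := by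
      rw [he₂def, norm_smul, hhalf, hAu]; ring
    set f : H := A x₁ + e₁ with hfdef
    have hf₂ : A x₂ + e₂ = f := by
      rw [hfdef, hx₂def, map_sub, he₁def, he₂def]
      module
    rw [hE]
    apply le_iInf
    intro est
    set g : EuclideanSpace ℂ (Fin N) := est f with hgdef
    have htri : 2 * σ / ε ≤ ‖g - x₁‖ + ‖g - x₂‖ := by
      have h1 : ‖x₁ - x₂‖ ≤ ‖x₁ - g‖ + ‖g - x₂‖ := by
        have := dist_triangle x₁ g x₂
        simpa [dist_eq_norm] using this
      rw [hsub, hunorm] at h1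
      rw [norm_sub_rev x₁ g] at h1
      linarith
    have hkey : σ / ε ≤ ‖g - x₁‖ ∨ σ / ε ≤ ‖g - x₂‖ := by
      by_contra hc
      push_neg at hc
      have : 2 * σ / ε = σ / ε + σ / ε := by ring
      linarith [hc.1, hc.2]
    have hmono : σ / (2 * ε) ≤ σ / ε := by
      rw [div_le_div_iff₀ (by positivity) hεpos]
      nlinarith
    rcases hkey with h | h
    · refine le_trans ?_ (le_iSup_of_le ⟨x₁, hs₁⟩ (le_iSup_of_le ⟨e₁, he₁⟩ le_rfl))
      exact ENNReal.ofReal_le_ofReal (le_trans hmono (by rw [← hfdef, ← hgdef]; exact h))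
    · refine le_trans ?_ (le_iSup_of_le ⟨x₂, hs₂⟩ (le_iSup_of_le ⟨e₂, he₂⟩ le_rfl))
      refine ENNReal.ofReal_le_ofReal (le_trans hmono ?_)
      rw [hf₂, ← hgdef]
      exact h
  · -- upper bound
    set P : H → Prop := fun f => ∃ x : EuclideanSpace ℂ (Fin N), sparsity x ≤ k ∧ ‖A x - f‖ ≤ σ
      with hPdef
    set est₀ : H → EuclideanSpace ℂ (Fin N) := fun f => if h : P f then h.choose else 0
      with hest₀def
    rw [hE]
    refine le_trans (iInf_le _ est₀) ?_
    refine iSup_le fun x₀ => iSup_le fun e => ?_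
    set f : H := A x₀.1 + e.1 with hfdef
    have hPf : P f := by
      refine ⟨x₀.1, x₀.2, ?_⟩
      have : A x₀.1 - f = -e.1 := by rw [hfdef]; abel
      rw [this, norm_neg, e.2]
    have heq : est₀ f = hPf.choose := dif_pos hPf
    obtain ⟨hsc, hnc⟩ := hPf.choose_spec
    rw [← heq] at hsc hnc
    have h2 : ‖f - A x₀.1‖ = σ := by
      have : f - A x₀.1 = e.1 := by rw [hfdef]; abel
      rw [this, e.2]
    have hnorm : ‖A (est₀ f) - A x₀.1‖ ≤ 2 * σ := by
      calc ‖A (est₀ f) - A x₀.1‖ = ‖(A (est₀ f) - f) + (f - A x₀.1)‖ := by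
            rw [sub_add_sub_cancel]
        _ ≤ ‖A (est₀ f) - f‖ + ‖f - A x₀.1‖ := norm_add_le _ _
        _ ≤ 2 * σ := by rw [h2]; linarith
    have hsp : sparsity (est₀ f - x₀.1) ≤ 2 * k := by
      have := sparsity_sub_le (est₀ f) x₀.1
      have hx := x₀.2
      omega
    have hco := hcoerc _ hsp
    rw [map_sub] at hco
    have hfin : ‖est₀ f - x₀.1‖ ≤ 2 * σ / ε := by
      rw [le_div_iff₀ hεpos]
      nlinarith
    exact ENNReal.ofReal_le_ofReal hfin
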